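/- An integer triple (a, b, c) with positive entries is a primitive Eisensteinian triplet if and only if (a,b,c) = (1,1,1), or there exists a finite (possibly empty) product M of the matrices M₁,…,M₅ (M₁ = [[7,−6,6],[8,−7,7],[4,−4,3]], M₂ = [[7,6,−6],[8,7,−7],[4,3,−4]], M₃ = [[7,6,0],[8,7,0],[4,3,1]], M₄ = [[7,0,6],[8,0,7],[4,1,3]], M₅ = [[7,0,−6],[8,0,−7],[4,1,−4]]) and a vector v ∈ {(7,8,5)ᵗ, (13,15,7)ᵗ} such that M·v = (a,b,c)ᵗ or M·v = (a,b,b−c)ᵗ (after ordering so that b ≥ c). -/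

import Mathlib

/-!
Each `Mᵢ` is unimodular and preserves the form `b² + c² - bc - a²`, and so does the twin map
`T : (a, b, c) ↦ (a, b, b - c)`, which satisfies `T Mᵢ T = M₆₋ᵢ`. Hence the forest consists of
primitive triplets, and lying in the forest up to a twin is preserved by every `Mᵢ`.

Conversely, after passing to the twin we may assume `b ≥ 2c`. If `c > 0`, then `(a, b, c) = Mᵢ u`
for a triplet `u` with `0 ≤ u₂ ≤ u₁` and first entry `7a - 6b ∈ (0, a)`: either
`u = M₁⁻¹ (a, b, c) = (7a - 6b, 4a - 3b - c, 4b - 4a - c)`, possibly with its last two entries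
swapped (which trades `M₁` for `M₂`), or `u = M₃⁻¹ (a, b, c)` when `4a - 3b - c < 0`. So descent
on `a` ends at `c = 0`, i.e. at `(1, 1, 0) = T (1, 1, 1)`, and each `Mᵢ (1, 1, 1)` is `(1, 1, 1)`
or the twin of a root.
-/

open Matrix

def Mmat : Fin 5 → Matrix (Fin 3) (Fin 3) ℤ
  | 0 => !![7, -6, 6; 8, -7, 7; 4, -4, 3]
  | 1 => !![7, 6, -6; 8, 7, -7; 4, 3, -4]
  | 2 => !![7, 6, 0; 8, 7, 0; 4, 3, 1]
  | 3 => !![7, 0, 6; 8, 0, 7; 4, 1, 3]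
  | 4 => !![7, 0, -6; 8, 0, -7; 4, 1, -4]

section Primitive

variable {n R : Type*} [Fintype n] [CommRing R]

def IsPrimitiveVec (v : n → R) : Prop :=
  ∀ d : R, (∀ i, d ∣ v i) → IsUnit d

theorem dvd_mulVec_apply {d : R} {v : n → R} (M : Matrix n n R) (hv : ∀ j, d ∣ v j) (i : n) :
    d ∣ (M *ᵥ v) i :=
  Finset.dvd_sum fun j _ => (hv j).mul_left _

theorem IsPrimitiveVec.of_mulVec {M : Matrix n n R} {v : n → R} (h : IsPrimitiveVec (M *ᵥ v)) :
    IsPrimitiveVec v :=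
  fun d hd => h d (dvd_mulVec_apply M hd)

theorem isPrimitiveVec_mulVec_iff [DecidableEq n] {M : Matrix n n R} (hM : IsUnit M) {v : n → R} :
    IsPrimitiveVec (M *ᵥ v) ↔ IsPrimitiveVec v := by
  refine ⟨IsPrimitiveVec.of_mulVec, fun h => IsPrimitiveVec.of_mulVec (M := M⁻¹) ?_⟩
  rwa [mulVec_mulVec, nonsing_inv_mul _ ((isUnit_iff_isUnit_det M).mp hM), one_mulVec]

end Primitive

theorem isPrimitiveVec_iff_gcd_eq_one (a b c : ℤ) :
    IsPrimitiveVec ![a, b, c] ↔ Int.gcd a (Int.gcd b c) = 1 := by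
  have hdvd : ∀ d : ℤ, (∀ i, d ∣ ![a, b, c] i) ↔ d ∣ (Int.gcd a (Int.gcd b c) : ℤ) := by
    simp [Fin.forall_fin_succ, Int.dvd_coe_gcd_iff]
  constructor
  · intro h
    simpa [Int.isUnit_iff] using h _ ((hdvd _).mpr dvd_rfl)
  · intro h d hd
    rw [hdvd, h, Nat.cast_one] at hd
    exact isUnit_of_dvd_one hd

def eisensteinForm (w : Fin 3 → ℤ) : ℤ :=
  w 1 ^ 2 + w 2 ^ 2 - w 1 * w 2 - w 0 ^ 2

def IsPrimitiveEisenstein (w : Fin 3 → ℤ) : Prop :=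
  eisensteinForm w = 0 ∧ IsPrimitiveVec w

theorem isPrimitiveEisenstein_iff (a b c : ℤ) :
    IsPrimitiveEisenstein ![a, b, c] ↔
      a ^ 2 = b ^ 2 + c ^ 2 - b * c ∧ Int.gcd a (Int.gcd b c) = 1 := by
  rw [IsPrimitiveEisenstein, isPrimitiveVec_iff_gcd_eq_one, eisensteinForm]
  simp only [cons_val_zero, cons_val_one, cons_val_two, head_cons, tail_cons]
  constructor <;> rintro ⟨h, hg⟩ <;> exact ⟨by linarith, hg⟩

theorem isPrimitiveEisenstein_mulVec_iff {M : Matrix (Fin 3) (Fin 3) ℤ} (hM : IsUnit M)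
    (hQ : ∀ w, eisensteinForm (M *ᵥ w) = eisensteinForm w) {w : Fin 3 → ℤ} :
    IsPrimitiveEisenstein (M *ᵥ w) ↔ IsPrimitiveEisenstein w := by
  rw [IsPrimitiveEisenstein, IsPrimitiveEisenstein, hQ, isPrimitiveVec_mulVec_iff hM]

def twinMatrix : Matrix (Fin 3) (Fin 3) ℤ := !![1, 0, 0; 0, 1, 0; 0, 1, -1]

@[simp]
theorem twinMatrix_mulVec (a b c : ℤ) : twinMatrix *ᵥ ![a, b, c] = ![a, b, b - c] := by
  ext k; fin_cases k <;> simp [twinMatrix, mulVec, dotProduct, Fin.sum_univ_three]; ring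

theorem twinMatrix_mul_self : twinMatrix * twinMatrix = 1 := by decide

theorem isUnit_twinMatrix : IsUnit twinMatrix :=
  IsUnit.of_mul_eq_one _ twinMatrix_mul_self

theorem eisensteinForm_twinMatrix_mulVec (w : Fin 3 → ℤ) :
    eisensteinForm (twinMatrix *ᵥ w) = eisensteinForm w := by
  simp [eisensteinForm, twinMatrix, mulVec, dotProduct, Fin.sum_univ_three]; ring

theorem isUnit_Mmat (i : Fin 5) : IsUnit (Mmat i) := by
  rw [isUnit_iff_isUnit_det]; fin_cases i <;> simp [Mmat, det_fin_three]

theorem eisensteinForm_Mmat_mulVec (i : Fin 5) (w : Fin 3 → ℤ) :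
    eisensteinForm (Mmat i *ᵥ w) = eisensteinForm w := by
  fin_cases i <;> simp [eisensteinForm, Mmat, mulVec, dotProduct, Fin.sum_univ_three] <;> ring

theorem Mmat_rev_mul_twinMatrix (i : Fin 5) : Mmat i.rev * twinMatrix = twinMatrix * Mmat i := by
  fin_cases i <;> decide

def InForest (w : Fin 3 → ℤ) : Prop :=
  ∃ (l : List (Fin 5)) (v : Fin 3 → ℤ),
    (v = ![7, 8, 5] ∨ v = ![13, 15, 7]) ∧ (l.map Mmat).prod *ᵥ v = w

theorem InForest.mulVec {w : Fin 3 → ℤ} (h : InForest w) (i : Fin 5) :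
    InForest (Mmat i *ᵥ w) := by
  obtain ⟨l, v, hv, rfl⟩ := h
  exact ⟨i :: l, v, hv, by rw [List.map_cons, List.prod_cons, ← mulVec_mulVec]⟩

theorem InForest.isPrimitiveEisenstein {w : Fin 3 → ℤ} (h : InForest w) :
    IsPrimitiveEisenstein w := by
  obtain ⟨l, v, hv, rfl⟩ := h
  induction l with
  | nil =>
    rcases hv with rfl | rfl <;> norm_num [isPrimitiveEisenstein_iff]
  | cons i l ih =>
    rwa [List.map_cons, List.prod_cons, ← mulVec_mulVec,
      isPrimitiveEisenstein_mulVec_iff (isUnit_Mmat i) (eisensteinForm_Mmat_mulVec i)]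

def Rooted (w : Fin 3 → ℤ) : Prop :=
  w = ![1, 1, 1] ∨ InForest w

def RootedUpToTwin (w : Fin 3 → ℤ) : Prop :=
  Rooted w ∨ Rooted (twinMatrix *ᵥ w)

theorem rootedUpToTwin_twinMatrix_mulVec_iff {w : Fin 3 → ℤ} :
    RootedUpToTwin (twinMatrix *ᵥ w) ↔ RootedUpToTwin w := by
  rw [RootedUpToTwin, RootedUpToTwin, mulVec_mulVec, twinMatrix_mul_self, one_mulVec, or_comm]

theorem Rooted.mulVec {w : Fin 3 → ℤ} (h : Rooted w) (i : Fin 5) :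
    RootedUpToTwin (Mmat i *ᵥ w) := by
  rcases h with rfl | h
  · have : ∀ i, Mmat i *ᵥ ![1, 1, 1] = ![1, 1, 1] ∨
        (twinMatrix *ᵥ (Mmat i *ᵥ ![1, 1, 1]) = ![7, 8, 5] ∨
          twinMatrix *ᵥ (Mmat i *ᵥ ![1, 1, 1]) = ![13, 15, 7]) := by
      decide
    rcases this i with h | h
    · exact .inl (.inl h)
    · exact .inr (.inr ⟨[], _, h, by simp⟩)
  · exact .inl (.inr (h.mulVec i))

theorem RootedUpToTwin.mulVec {w : Fin 3 → ℤ} (h : RootedUpToTwin w) (i : Fin 5) :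
    RootedUpToTwin (Mmat i *ᵥ w) := by
  rcases h with h | h
  · exact h.mulVec i
  · have := h.mulVec i.rev
    rwa [mulVec_mulVec, Mmat_rev_mul_twinMatrix, ← mulVec_mulVec,
      rootedUpToTwin_twinMatrix_mulVec_iff] at this

theorem exists_Mmat_mulVec_eq {a b c : ℤ} (ha : 0 < a) (hc : 0 < c) (h2c : 2 * c ≤ b)
    (hQ : a ^ 2 = b ^ 2 + c ^ 2 - b * c) :
    ∃ (i : Fin 5) (x y z : ℤ), 0 < x ∧ x < a ∧ 0 ≤ z ∧ z ≤ y ∧ Mmat i *ᵥ ![x, y, z] = ![a, b, c] := by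
  have hab : a < b := by nlinarith
  have hx : 0 < 7 * a - 6 * b := by nlinarith [sq_nonneg (b - 2 * c)]
  have hq : 0 < 4 * b - 4 * a - c := by
    have key : (a + b) * (4 * b - 4 * a - c) = c * (3 * b - 4 * c - a) := by
      linear_combination -4 * hQ
    have : 0 < (a + b) * (4 * b - 4 * a - c) := key ▸ mul_pos hc (by linarith)
    exact pos_of_mul_pos_right this (by linarith)
  rcases le_or_gt 0 (4 * a - 3 * b - c) with hp | hp
  · rcases le_total (4 * b - 4 * a - c) (4 * a - 3 * b - c) with hqp | hpq
    · refine ⟨0, _, _, _, hx, by linarith, hq.le, hqp, ?_⟩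
      ext k; fin_cases k <;> simp [Mmat, mulVec, dotProduct, Fin.sum_univ_three] <;> ring
    · refine ⟨1, _, _, _, hx, by linarith, hp, hpq, ?_⟩
      ext k; fin_cases k <;> simp [Mmat, mulVec, dotProduct, Fin.sum_univ_three] <;> ring
  · refine ⟨2, _, 7 * b - 8 * a, 3 * b + c - 4 * a, hx, by linarith, by linarith, by linarith, ?_⟩
    ext k; fin_cases k <;> simp [Mmat, mulVec, dotProduct, Fin.sum_univ_three] <;> ring

theorem rootedUpToTwin_of_isPrimitiveEisenstein {a b c : ℤ} (ha : 0 < a) (hc : 0 ≤ c)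
    (hcb : c ≤ b) (h : IsPrimitiveEisenstein ![a, b, c]) : RootedUpToTwin ![a, b, c] := by
  induction hn : a.toNat using Nat.strong_induction_on generalizing a b c with
  | _ n ih =>
  wlog h2c : 2 * c ≤ b generalizing c
  · have := this (c := b - c) (by omega) (by omega)
      (by rwa [← twinMatrix_mulVec,
        isPrimitiveEisenstein_mulVec_iff isUnit_twinMatrix eisensteinForm_twinMatrix_mulVec])
      (by omega)
    rwa [← twinMatrix_mulVec, rootedUpToTwin_twinMatrix_mulVec_iff] at this
  have hQ := ((isPrimitiveEisenstein_iff a b c).mp h).1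
  rcases hc.eq_or_lt with rfl | hc
  · obtain rfl : a = b := by nlinarith
    have ha1 : IsUnit a := h.2 a (by simp [Fin.forall_fin_succ])
    obtain rfl : a = 1 := by rw [Int.isUnit_iff] at ha1; omega
    exact .inr (.inl (by simp))
  obtain ⟨i, x, y, z, hx, hxa, hz, hzy, hw⟩ := exists_Mmat_mulVec_eq ha hc h2c hQ
  have hu : IsPrimitiveEisenstein ![x, y, z] :=
    (isPrimitiveEisenstein_mulVec_iff (isUnit_Mmat i) (eisensteinForm_Mmat_mulVec i)).mp (hw ▸ h)
  rw [← hw]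
  exact (ih x.toNat (by omega) hx hz hzy hu rfl).mulVec i

theorem eisenstein_forest_iff_general (a b c : ℤ) (ha : 0 < a) (hc : 0 < c)
    (hbc : b ≥ c) :
    (a ^ 2 = b ^ 2 + c ^ 2 - b * c ∧ Int.gcd a (Int.gcd b c) = 1) ↔
      ((a, b, c) = (1, 1, 1) ∨
        ∃ (l : List (Fin 5)) (v : Fin 3 → ℤ),
          (v = ![7, 8, 5] ∨ v = ![13, 15, 7]) ∧
          ((l.map Mmat).prod.mulVec v = ![a, b, c] ∨
            (l.map Mmat).prod.mulVec v = ![a, b, b - c])) := by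
  rw [← isPrimitiveEisenstein_iff]
  constructor
  · intro h
    rcases rootedUpToTwin_of_isPrimitiveEisenstein ha hc.le hbc h with
      (h1 | ⟨l, v, hv, hl⟩) | (h1 | ⟨l, v, hv, hl⟩)
    · left; simpa using h1
    · exact .inr ⟨l, v, hv, .inl hl⟩
    · simp only [twinMatrix_mulVec, vecCons_inj] at h1
      omega
    · exact .inr ⟨l, v, hv, .inr (by simpa using hl)⟩
  · rintro (h | ⟨l, v, hv, hl | hl⟩)
    · simp only [Prod.mk.injEq] at h
      obtain ⟨rfl, rfl, rfl⟩ := h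
      simp [isPrimitiveEisenstein_iff]
    · exact hl ▸ InForest.isPrimitiveEisenstein ⟨l, v, hv, rfl⟩
    · rw [← isPrimitiveEisenstein_mulVec_iff isUnit_twinMatrix eisensteinForm_twinMatrix_mulVec,
        twinMatrix_mulVec, ← hl]
      exact InForest.isPrimitiveEisenstein ⟨l, v, hv, rfl⟩

/-- 'iff' form of the main theorem: a triple of positive
integers `(a,b,c)` ordered with `b ≥ c` is a primitive Eisensteinian triplet if
and only if it is `(1,1,1)`, or some finite product of the `Mᵢ` applied to
`(7,8,5)ᵗ` or `(13,15,7)ᵗ` equals `(a,b,c)ᵗ` or `(a,b,b−c)ᵗ`. -/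
theorem eisenstein_forest_iff (a b c : ℤ) (ha : 0 < a) (hb : 0 < b) (hc : 0 < c)
    (hbc : b ≥ c) :
    (a ^ 2 = b ^ 2 + c ^ 2 - b * c ∧ Int.gcd a (Int.gcd b c) = 1) ↔
      ((a, b, c) = (1, 1, 1) ∨
        ∃ (l : List (Fin 5)) (v : Fin 3 → ℤ),
          (v = ![7, 8, 5] ∨ v = ![13, 15, 7]) ∧
          ((l.map Mmat).prod.mulVec v = ![a, b, c] ∨
            (l.map Mmat).prod.mulVec v = ![a, b, b - c])) :=
  eisenstein_forest_iff_general a b c ha hc hbc
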